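/- arXiv:2201.12816 — 4 statements merged into one kernel-verified Lean document; each statement's English description precedes it below -/
import Mathlib

section
/- Let n ≥ 1, let 0 < β ≤ 1 and 0 < α₁ ≤ α₂. For each k ∈ ℕ let M_k be an n×n real symmetric matrix with α₁‖v‖² ≤ vᵀ M_k v ≤ α₂‖v‖² for all v ∈ ℝⁿ, and let A_k be an n×n real matrix with A_kᵀ M_{k+1} A_k ⪯ (1−β) M_k. If δ_{k+1} = A_k δ_k for all k, then ‖δ_k‖ ≤ √(α₂/α₁) · (1−β)^{k/2} · ‖δ_0‖ for every k ∈ ℕ; in particular, when β < 1 this equals R·e^{−λk}·‖δ_0‖ with R = √(α₂/α₁) and λ = −(1/2)·log(1−β). -/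
/-!
The quadratic form `Vₖ = δₖᵀ Mₖ δₖ` is a Lyapunov function: the contraction condition gives
`V_{k+1} ≤ (1 - β) Vₖ`, hence `Vₖ ≤ (1 - β)ᵏ V₀`, and the uniform bounds on `Mₖ` turn this into
`α₁ ‖δₖ‖² ≤ (1 - β)ᵏ α₂ ‖δ₀‖²`.
-/

open Matrix

/-- The Euclidean norm of a vector in `ℝⁿ`. -/
noncomputable def euclNorm {n : ℕ} (v : Fin n → ℝ) : ℝ :=
  Real.sqrt (v ⬝ᵥ v)

theorem Matrix.dotProduct_mulVec_mulVec_le_of_posSemidef {ι : Type*} [Fintype ι]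
    {P Q A : Matrix ι ι ℝ} {c : ℝ} (h : (c • P - Aᵀ * Q * A).PosSemidef) (x : ι → ℝ) :
    A *ᵥ x ⬝ᵥ Q *ᵥ (A *ᵥ x) ≤ c * (x ⬝ᵥ P *ᵥ x) := by
  have hx : 0 ≤ x ⬝ᵥ (c • P - Aᵀ * Q * A) *ᵥ x := h.dotProduct_mulVec_nonneg x
  rw [sub_mulVec, dotProduct_sub, smul_mulVec, dotProduct_smul, ← mulVec_mulVec,
    ← mulVec_mulVec, dotProduct_mulVec x Aᵀ, vecMul_transpose, smul_eq_mul] at hx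
  linarith

theorem euclNorm_sq {n : ℕ} (v : Fin n → ℝ) : euclNorm v ^ 2 = v ⬝ᵥ v :=
  Real.sq_sqrt (dotProduct_self_star_nonneg v)

theorem le_sqrt_div_mul_sqrt_mul_of_mul_sq_le {a b c x y : ℝ} (ha : 0 < a) (hc : 0 ≤ c)
    (hx : 0 ≤ x) (hy : 0 ≤ y) (h : a * x ^ 2 ≤ c * (b * y ^ 2)) :
    x ≤ √(b / a) * √c * y := by
  have hsq : x ^ 2 ≤ b / a * (c * y ^ 2) := by
    rw [div_mul_eq_mul_div, le_div_iff₀ ha]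
    linarith
  calc x = √(x ^ 2) := (Real.sqrt_sq hx).symm
    _ ≤ √(b / a * (c * y ^ 2)) := Real.sqrt_le_sqrt hsq
    _ = √(b / a) * √c * y := by
      rw [Real.sqrt_mul' _ (by positivity), Real.sqrt_mul hc, Real.sqrt_sq hy, mul_assoc]

theorem Real.rpow_natCast_div_two {c : ℝ} (hc : 0 ≤ c) (k : ℕ) :
    c ^ ((k : ℝ) / 2) = √(c ^ k) := by
  rw [Real.sqrt_eq_rpow, ← Real.rpow_natCast, ← Real.rpow_mul hc, mul_one_div]

theorem Real.rpow_div_two_eq_exp {c : ℝ} (hc : 0 < c) (t : ℝ) :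
    c ^ (t / 2) = Real.exp (-(-(1 / 2 : ℝ) * Real.log c) * t) := by
  rw [Real.rpow_def_of_pos hc]
  ring_nf

theorem contraction_incremental_exponential_stability_general
    (n : ℕ) (β α₁ α₂ : ℝ)
    (hβ1 : β ≤ 1) (hα₁ : 0 < α₁)
    (M A : ℕ → Matrix (Fin n) (Fin n) ℝ)
    (hMlb : ∀ k, ∀ v : Fin n → ℝ, α₁ * (euclNorm v) ^ 2 ≤ v ⬝ᵥ (M k).mulVec v)
    (hMub : ∀ k, ∀ v : Fin n → ℝ, v ⬝ᵥ (M k).mulVec v ≤ α₂ * (euclNorm v) ^ 2)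
    (hcontr : ∀ k, ((1 - β) • M k - (A k)ᵀ * M (k + 1) * A k).PosSemidef)
    (δ : ℕ → Fin n → ℝ)
    (hδ : ∀ k, δ (k + 1) = (A k).mulVec (δ k)) :
    (∀ k : ℕ, euclNorm (δ k) ≤
        Real.sqrt (α₂ / α₁) * (1 - β) ^ ((k : ℝ) / 2) * euclNorm (δ 0)) ∧
    (β < 1 → ∀ k : ℕ,
        Real.sqrt (α₂ / α₁) * (1 - β) ^ ((k : ℝ) / 2) * euclNorm (δ 0) =
        Real.sqrt (α₂ / α₁) * Real.exp (-(-(1 / 2 : ℝ) * Real.log (1 - β)) * k) *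
          euclNorm (δ 0)) := by
  have hβ : 0 ≤ 1 - β := by linarith
  refine ⟨fun k => ?_, fun hβlt k => by rw [Real.rpow_div_two_eq_exp (by linarith)]⟩
  have hV : δ k ⬝ᵥ M k *ᵥ δ k ≤ (1 - β) ^ k * (δ 0 ⬝ᵥ M 0 *ᵥ δ 0) :=
    le_geom (u := fun j => δ j ⬝ᵥ M j *ᵥ δ j) hβ k fun j _ =>
      hδ j ▸ dotProduct_mulVec_mulVec_le_of_posSemidef (hcontr j) (δ j)
  have hnorm : α₁ * euclNorm (δ k) ^ 2 ≤ (1 - β) ^ k * (α₂ * euclNorm (δ 0) ^ 2) :=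
    calc α₁ * euclNorm (δ k) ^ 2 ≤ δ k ⬝ᵥ M k *ᵥ δ k := hMlb k _
      _ ≤ (1 - β) ^ k * (δ 0 ⬝ᵥ M 0 *ᵥ δ 0) := hV
      _ ≤ (1 - β) ^ k * (α₂ * euclNorm (δ 0) ^ 2) := by gcongr; exact hMub 0 _
  rw [Real.rpow_natCast_div_two hβ]
  exact le_sqrt_div_mul_sqrt_mul_of_mul_sq_le hα₁ (by positivity) (Real.sqrt_nonneg _)
    (Real.sqrt_nonneg _) hnorm

/-- For uniformly bounded symmetric metrics `α₁‖v‖² ≤ vᵀ Mₖ v ≤ α₂‖v‖²`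
satisfying the discrete contraction condition `Aₖᵀ M_{k+1} Aₖ ⪯ (1-β) Mₖ`
(`P ⪯ Q` meaning `Q - P` is positive semidefinite), solutions of `δ_{k+1} = Aₖ δₖ` satisfy
`‖δₖ‖ ≤ √(α₂/α₁) (1-β)^{k/2} ‖δ₀‖`; moreover when `β < 1` this bound equals
`R e^{-λ k} ‖δ₀‖` with `R = √(α₂/α₁)` and `λ = -(1/2) log (1-β)`. -/
theorem contraction_incremental_exponential_stability
    (n : ℕ) (hn : 1 ≤ n) (β α₁ α₂ : ℝ)
    (hβ0 : 0 < β) (hβ1 : β ≤ 1) (hα₁ : 0 < α₁) (hα₁₂ : α₁ ≤ α₂)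
    (M A : ℕ → Matrix (Fin n) (Fin n) ℝ)
    (hMsym : ∀ k, (M k).IsHermitian)
    (hMlb : ∀ k, ∀ v : Fin n → ℝ, α₁ * (euclNorm v) ^ 2 ≤ v ⬝ᵥ (M k).mulVec v)
    (hMub : ∀ k, ∀ v : Fin n → ℝ, v ⬝ᵥ (M k).mulVec v ≤ α₂ * (euclNorm v) ^ 2)
    (hcontr : ∀ k, ((1 - β) • M k - (A k)ᵀ * M (k + 1) * A k).PosSemidef)
    (δ : ℕ → Fin n → ℝ)
    (hδ : ∀ k, δ (k + 1) = (A k).mulVec (δ k)) :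
    (∀ k : ℕ, euclNorm (δ k) ≤
        Real.sqrt (α₂ / α₁) * (1 - β) ^ ((k : ℝ) / 2) * euclNorm (δ 0)) ∧
    (β < 1 → ∀ k : ℕ,
        Real.sqrt (α₂ / α₁) * (1 - β) ^ ((k : ℝ) / 2) * euclNorm (δ 0) =
        Real.sqrt (α₂ / α₁) * Real.exp (-(-(1 / 2 : ℝ) * Real.log (1 - β)) * k) *
          euclNorm (δ 0)) :=
  contraction_incremental_exponential_stability_general n β α₁ α₂ hβ1 hα₁ M A hMlb hMub hcontr δ hδ
end

section
/- Let n, ℓ ≥ 1 and L ≥ 0. Let Ω be a map from ℝ^ℓ to the n×n real symmetric matrices such that |vᵀ(Ω(x) − Ω(y))v| ≤ L·‖x − y‖·‖v‖² for all x, y ∈ ℝ^ℓ and v ∈ ℝⁿ. Let λ > 0, let x_1, …, x_N ∈ ℝ^ℓ and ξ_1, …, ξ_N ≥ 0 be such that vᵀ Ω(x_i) v ≥ λ‖v‖² for all v and each i, and let X ⊆ ⋃_{i=1}^N B̄(x_i, ξ_i) (closed Euclidean balls). Then for every x ∈ X and v ∈ ℝⁿ, vᵀ Ω(x) v ≥ (min_{1≤i≤N}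 (λ − L·ξ_i)) · ‖v‖². -/
open Matrix

/-- If the symmetric-matrix-valued map `Ω` on `ℝ^ℓ` has quadratic forms
Lipschitz in the base point (`|vᵀ(Ω(x)-Ω(y))v| ≤ L ‖x-y‖ ‖v‖²`), and is positive
definite with margin `λ` (`vᵀ Ω(xᵢ) v ≥ λ‖v‖²`) at finitely many points `x₁,…,x_N`,
then on any set `X` covered by the closed Euclidean balls `B̄(xᵢ, ξᵢ)` we have
`vᵀ Ω(x) v ≥ (minᵢ (λ - L ξᵢ)) ‖v‖²`. -/
theorem learned_contraction_from_finite_samples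
    (n l : ℕ) (hn : 1 ≤ n) (hl : 1 ≤ l) (L : ℝ) (hL : 0 ≤ L)
    (Ω : EuclideanSpace ℝ (Fin l) → Matrix (Fin n) (Fin n) ℝ)
    (hΩsym : ∀ a, (Ω a).IsHermitian)
    (hΩLip : ∀ a b : EuclideanSpace ℝ (Fin l), ∀ v : Fin n → ℝ,
      |v ⬝ᵥ (Ω a - Ω b).mulVec v| ≤ L * ‖a - b‖ * (euclNorm v) ^ 2)
    (lam : ℝ) (hlam : 0 < lam)
    (N : ℕ) (hN : 0 < N)
    (x : Fin N → EuclideanSpace ℝ (Fin l)) (ξ : Fin N → ℝ) (hξ : ∀ i, 0 ≤ ξ i)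
    (hmargin : ∀ (i : Fin N) (v : Fin n → ℝ),
      lam * (euclNorm v) ^ 2 ≤ v ⬝ᵥ (Ω (x i)).mulVec v)
    (X : Set (EuclideanSpace ℝ (Fin l)))
    (hX : X ⊆ ⋃ i : Fin N, Metric.closedBall (x i) (ξ i)) :
    ∀ z ∈ X, ∀ v : Fin n → ℝ,
      (Finset.univ.inf' ⟨⟨0, hN⟩, Finset.mem_univ _⟩ fun i : Fin N => lam - L * ξ i) *
          (euclNorm v) ^ 2 ≤ v ⬝ᵥ (Ω z).mulVec v := by
  intro z hz v
  obtain ⟨_, ⟨i, rfl⟩, hzi⟩ := hX hz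
  have hdist : ‖z - x i‖ ≤ ξ i := by
    simpa [dist_eq_norm] using hzi
  have hnn : 0 ≤ (euclNorm v) ^ 2 := sq_nonneg _
  have hlip := hΩLip (x i) z v
  have h1 : v ⬝ᵥ (Ω (x i)).mulVec v - v ⬝ᵥ (Ω z).mulVec v
      ≤ L * ξ i * (euclNorm v) ^ 2 := by
    have h2 : v ⬝ᵥ (Ω (x i)).mulVec v - v ⬝ᵥ (Ω z).mulVec v
        ≤ L * ‖x i - z‖ * (euclNorm v) ^ 2 := by
      have : v ⬝ᵥ (Ω (x i) - Ω z).mulVec v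
          = v ⬝ᵥ (Ω (x i)).mulVec v - v ⬝ᵥ (Ω z).mulVec v := by
        simp [sub_mulVec, dotProduct_sub]
      linarith [le_abs_self (v ⬝ᵥ (Ω (x i) - Ω z).mulVec v), hlip, this ▸ hlip]
    have : ‖x i - z‖ = ‖z - x i‖ := by rw [norm_sub_rev]
    nlinarith [mul_le_mul_of_nonneg_right (mul_le_mul_of_nonneg_left (this ▸ hdist) hL) hnn]
  have hinf : (Finset.univ.inf' ⟨⟨0, hN⟩, Finset.mem_univ _⟩ fun i : Fin N => lam - L * ξ i)
      ≤ lam - L * ξ i := Finset.inf'_le _ (Finset.mem_univ i)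
  have := hmargin i v
  nlinarith [mul_le_mul_of_nonneg_right hinf hnn]
end

section
/- Let n ≥ 1, 0 < β ≤ 1, and 0 < α₁ ≤ α₂. Let Φ: ℝⁿ → ℝⁿ be continuously differentiable and let M be a continuous map from ℝⁿ to the n×n real symmetric matrices such that α₁‖v‖² ≤ vᵀ M(x) v ≤ α₂‖v‖² for all x, v ∈ ℝⁿ, and such that DΦ(x)ᵀ M(Φ(x)) DΦ(x) ⪯ (1−β) M(x) for every x ∈ ℝⁿ, where DΦ(x) is the Jacobian of Φ at x. Then for all x, y ∈ ℝⁿ and all k ∈ ℕ, ‖Φ^{[k]}(x) − Φ^{[k]}(y)‖ ≤ √(α₂/α₁) · (1−β)^{k/2} · ‖x − y‖, where Φ^{[k]} denotes the k-fold iterate of Φ. -/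
/-!
The contraction condition propagates along orbits: by the chain rule the Jacobian `D` of `Φ^[k]`
at `z` is the product of the Jacobians of `Φ` along the orbit of `z`, and iterating the condition
gives `Dᵀ M(Φ^[k] z) D ⪯ (1 - β)^k M(z)`. Comparing with the metric bounds,
`α₁ ‖D v‖² ≤ (1 - β)^k α₂ ‖v‖²`, so every Jacobian of `Φ^[k]` has operator norm at most
`√(α₂/α₁) (1 - β)^{k/2}`, and the mean value inequality on the convex set `ℝⁿ` concludes.
-/

open Matrix

theorem Matrix.PosSemidef.dotProduct_mulVec_mulVec_le {ι : Type*} [Fintype ι]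
    {A P Q : Matrix ι ι ℝ} {c : ℝ}
    (h : (c • P - Aᵀ * Q * A).PosSemidef) (w : ι → ℝ) :
    (A *ᵥ w) ⬝ᵥ Q *ᵥ (A *ᵥ w) ≤ c * (w ⬝ᵥ P *ᵥ w) := by
  have hw := h.dotProduct_mulVec_nonneg w
  have hA : w ⬝ᵥ (Aᵀ * Q * A) *ᵥ w = (A *ᵥ w) ⬝ᵥ Q *ᵥ (A *ᵥ w) := by
    rw [← mulVec_mulVec, ← mulVec_mulVec, dotProduct_mulVec, vecMul_transpose]
  rw [star_trivial, sub_mulVec, dotProduct_sub, smul_mulVec, dotProduct_smul, smul_eq_mul,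
    hA] at hw
  linarith

def iterateJacobian {ι : Type*} [Fintype ι] [DecidableEq ι] (Φ : (ι → ℝ) → ι → ℝ)
    (J : (ι → ℝ) → Matrix ι ι ℝ) : ℕ → (ι → ℝ) → Matrix ι ι ℝ
  | 0, _ => 1
  | k + 1, z => J (Φ^[k] z) * iterateJacobian Φ J k z

section IterateJacobian

variable {ι : Type*} [Fintype ι] [DecidableEq ι] {Φ : (ι → ℝ) → ι → ℝ}
  {J : (ι → ℝ) → Matrix ι ι ℝ}

theorem iterateJacobian_succ_mulVec (k : ℕ) (z v : ι → ℝ) :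
    iterateJacobian Φ J (k + 1) z *ᵥ v = J (Φ^[k] z) *ᵥ (iterateJacobian Φ J k z *ᵥ v) := by
  rw [iterateJacobian, mulVec_mulVec]

theorem hasFDerivAt_iterate_of_jacobian
    (hJ : ∀ x, HasFDerivAt Φ (J x).mulVecLin.toContinuousLinearMap x) (k : ℕ) (z : ι → ℝ) :
    HasFDerivAt Φ^[k] (iterateJacobian Φ J k z).mulVecLin.toContinuousLinearMap z := by
  induction k with
  | zero =>
    refine (hasFDerivAt_id z).congr_fderiv ?_
    ext v
    simp [iterateJacobian]
  | succ k ih =>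
    rw [Function.iterate_succ']
    refine ((hJ (Φ^[k] z)).comp z ih).congr_fderiv ?_
    ext v
    simp [iterateJacobian_succ_mulVec]

theorem iterateJacobian_quadForm_le {M : (ι → ℝ) → Matrix ι ι ℝ} {c : ℝ} (hc : 0 ≤ c)
    (hcontr : ∀ x, (c • M x - (J x)ᵀ * M (Φ x) * J x).PosSemidef) (k : ℕ) (z v : ι → ℝ) :
    (iterateJacobian Φ J k z *ᵥ v) ⬝ᵥ M (Φ^[k] z) *ᵥ (iterateJacobian Φ J k z *ᵥ v)
      ≤ c ^ k * (v ⬝ᵥ M z *ᵥ v) := by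
  induction k with
  | zero => simp [iterateJacobian]
  | succ k ih =>
    rw [iterateJacobian_succ_mulVec, Function.iterate_succ_apply']
    calc _ ≤ c * ((iterateJacobian Φ J k z *ᵥ v) ⬝ᵥ
            M (Φ^[k] z) *ᵥ (iterateJacobian Φ J k z *ᵥ v)) :=
          (hcontr _).dotProduct_mulVec_mulVec_le _
      _ ≤ c * (c ^ k * (v ⬝ᵥ M z *ᵥ v)) := mul_le_mul_of_nonneg_left ih hc
      _ = c ^ (k + 1) * (v ⬝ᵥ M z *ᵥ v) := by ring

end IterateJacobian

section EuclNorm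

variable {n : ℕ}

theorem euclNorm_eq_norm_toLp (v : Fin n → ℝ) :
    euclNorm v = ‖(WithLp.toLp 2 v : EuclideanSpace ℝ (Fin n))‖ := by
  simp [EuclideanSpace.norm_eq, euclNorm, dotProduct, sq]

theorem euclNorm_nonneg (v : Fin n → ℝ) : 0 ≤ euclNorm v := Real.sqrt_nonneg _

theorem euclNorm_sub_le_of_hasFDerivAt {f : (Fin n → ℝ) → Fin n → ℝ}
    {L : (Fin n → ℝ) → (Fin n → ℝ) →L[ℝ] Fin n → ℝ} {C : ℝ} (hC : 0 ≤ C)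
    (hf : ∀ z, HasFDerivAt f (L z) z) (hL : ∀ z v, euclNorm (L z v) ≤ C * euclNorm v)
    (x y : Fin n → ℝ) : euclNorm (f x - f y) ≤ C * euclNorm (x - y) := by
  let e := PiLp.continuousLinearEquiv 2 ℝ (fun _ : Fin n => ℝ)
  let L' z := (e.symm.toContinuousLinearMap.comp (L (e z))).comp e.toContinuousLinearMap
  have hF : ∀ z, HasFDerivAt (e.symm ∘ f ∘ e) (L' z) z := fun z =>
    e.symm.hasFDerivAt.comp z ((hf (e z)).comp z e.hasFDerivAt)
  have hL' : ∀ z, ‖L' z‖ ≤ C := fun z =>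
    ContinuousLinearMap.opNorm_le_bound _ hC fun u => by
      simpa [L', e, euclNorm_eq_norm_toLp, PiLp.coe_continuousLinearEquiv,
        PiLp.coe_symm_continuousLinearEquiv] using hL (e z) (e u)
  have := convex_univ.norm_image_sub_le_of_norm_hasFDerivWithin_le
    (fun z _ => (hF z).hasFDerivWithinAt) (fun z _ => hL' z)
    (Set.mem_univ (e.symm y)) (Set.mem_univ (e.symm x))
  simpa [e, euclNorm_eq_norm_toLp, PiLp.coe_continuousLinearEquiv,
    PiLp.coe_symm_continuousLinearEquiv] using this

end EuclNorm

theorem euclNorm_iterateJacobian_mulVec_le {n : ℕ}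
    {Φ : (Fin n → ℝ) → Fin n → ℝ} {J M : (Fin n → ℝ) → Matrix (Fin n) (Fin n) ℝ}
    {β α₁ α₂ : ℝ} (hβ1 : β ≤ 1) (hα₁ : 0 < α₁) (hα₂ : 0 ≤ α₂)
    (hMlb : ∀ x (v : Fin n → ℝ), α₁ * (euclNorm v) ^ 2 ≤ v ⬝ᵥ (M x).mulVec v)
    (hMub : ∀ x (v : Fin n → ℝ), v ⬝ᵥ (M x).mulVec v ≤ α₂ * (euclNorm v) ^ 2)
    (hcontr : ∀ x, ((1 - β) • M x - (J x)ᵀ * M (Φ x) * J x).PosSemidef)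
    (k : ℕ) (z v : Fin n → ℝ) :
    euclNorm (iterateJacobian Φ J k z *ᵥ v) ≤
      √(α₂ / α₁) * (1 - β) ^ ((k : ℝ) / 2) * euclNorm v := by
  have hβ : 0 ≤ 1 - β := sub_nonneg.2 hβ1
  set w := iterateJacobian Φ J k z *ᵥ v
  have hquad : α₁ * euclNorm w ^ 2 ≤ (1 - β) ^ k * (α₂ * euclNorm v ^ 2) :=
    (hMlb _ w).trans <| (iterateJacobian_quadForm_le hβ hcontr k z v).trans <|
      mul_le_mul_of_nonneg_left (hMub z v) (pow_nonneg hβ k)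
  have hsq : euclNorm w ^ 2 ≤ α₂ / α₁ * (1 - β) ^ k * euclNorm v ^ 2 := by
    rw [div_mul_eq_mul_div, div_mul_eq_mul_div, le_div_iff₀ hα₁]
    linarith
  rw [Real.rpow_div_two_eq_sqrt _ hβ, Real.rpow_natCast]
  refine (pow_le_pow_iff_left₀ (euclNorm_nonneg w)
    (mul_nonneg (by positivity) (euclNorm_nonneg v)) two_ne_zero).1 ?_
  rwa [mul_pow, mul_pow, pow_right_comm _ k 2, Real.sq_sqrt (div_nonneg hα₂ hα₁.le),
    Real.sq_sqrt hβ]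

theorem contraction_implies_incremental_exponential_stability_general
    (n : ℕ) (β α₁ α₂ : ℝ)
    (hβ1 : β ≤ 1) (hα₁ : 0 < α₁) (hα₁₂ : α₁ ≤ α₂)
    (Φ : (Fin n → ℝ) → Fin n → ℝ)
    (J : (Fin n → ℝ) → Matrix (Fin n) (Fin n) ℝ)
    (hJ : ∀ x, HasFDerivAt Φ (J x).mulVecLin.toContinuousLinearMap x)
    (M : (Fin n → ℝ) → Matrix (Fin n) (Fin n) ℝ)
    (hMlb : ∀ x (v : Fin n → ℝ), α₁ * (euclNorm v) ^ 2 ≤ v ⬝ᵥ (M x).mulVec v)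
    (hMub : ∀ x (v : Fin n → ℝ), v ⬝ᵥ (M x).mulVec v ≤ α₂ * (euclNorm v) ^ 2)
    (hcontr : ∀ x, ((1 - β) • M x - (J x)ᵀ * M (Φ x) * J x).PosSemidef) :
    ∀ (x y : Fin n → ℝ) (k : ℕ),
      euclNorm (Φ^[k] x - Φ^[k] y) ≤
        Real.sqrt (α₂ / α₁) * (1 - β) ^ ((k : ℝ) / 2) * euclNorm (x - y) := by
  intro x y k
  exact euclNorm_sub_le_of_hasFDerivAt
    (mul_nonneg (Real.sqrt_nonneg _) (Real.rpow_nonneg (sub_nonneg.2 hβ1) _))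
    (hasFDerivAt_iterate_of_jacobian hJ k)
    (euclNorm_iterateJacobian_mulVec_le hβ1 hα₁ (hα₁.le.trans hα₁₂) hMlb hMub hcontr k) x y

/-- Theorem 1 in full: if the C¹ closed-loop map `Φ` with Jacobian
`J(x) = DΦ(x)` admits a continuous uniformly bounded symmetric metric `M`
(`α₁‖v‖² ≤ vᵀ M(x) v ≤ α₂‖v‖²`) satisfying the contraction condition
`DΦ(x)ᵀ M(Φ(x)) DΦ(x) ⪯ (1-β) M(x)` (`P ⪯ Q` meaning `Q - P` positive semidefinite),
then the iterates satisfy incremental exponential stability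
`‖Φ^[k](x) - Φ^[k](y)‖ ≤ √(α₂/α₁) (1-β)^{k/2} ‖x - y‖`. -/
theorem contraction_implies_incremental_exponential_stability
    (n : ℕ) (hn : 1 ≤ n) (β α₁ α₂ : ℝ)
    (hβ0 : 0 < β) (hβ1 : β ≤ 1) (hα₁ : 0 < α₁) (hα₁₂ : α₁ ≤ α₂)
    (Φ : (Fin n → ℝ) → Fin n → ℝ) (hΦ : ContDiff ℝ 1 Φ)
    (J : (Fin n → ℝ) → Matrix (Fin n) (Fin n) ℝ)
    (hJ : ∀ x, HasFDerivAt Φ (J x).mulVecLin.toContinuousLinearMap x)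
    (M : (Fin n → ℝ) → Matrix (Fin n) (Fin n) ℝ)
    (hMcont : Continuous M) (hMsym : ∀ x, (M x).IsHermitian)
    (hMlb : ∀ x (v : Fin n → ℝ), α₁ * (euclNorm v) ^ 2 ≤ v ⬝ᵥ (M x).mulVec v)
    (hMub : ∀ x (v : Fin n → ℝ), v ⬝ᵥ (M x).mulVec v ≤ α₂ * (euclNorm v) ^ 2)
    (hcontr : ∀ x, ((1 - β) • M x - (J x)ᵀ * M (Φ x) * J x).PosSemidef) :
    ∀ (x y : Fin n → ℝ) (k : ℕ),
      euclNorm (Φ^[k] x - Φ^[k] y) ≤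
        Real.sqrt (α₂ / α₁) * (1 - β) ^ ((k : ℝ) / 2) * euclNorm (x - y) :=
  contraction_implies_incremental_exponential_stability_general n β α₁ α₂ hβ1 hα₁ hα₁₂ Φ J hJ M hMlb
    hMub hcontr
end

section
/- Let n ≥ 1, 0 < β ≤ 1, 0 < α₁ ≤ α₂, and ε ≥ 0. Let Φ: ℝⁿ → ℝⁿ be continuously differentiable and let M be a continuous map from ℝⁿ to the n×n real symmetric matrices with α₁‖v‖² ≤ vᵀ M(x) v ≤ α₂‖v‖² for all x, v, and DΦ(x)ᵀ M(Φ(x)) DΦ(x) ⪯ (1−β) M(x) for all x. Let (x_k) and (y_k) be sequences in ℝⁿ with x_{k+1} = Φ(x_k) + w_k where ‖w_k‖ ≤ ε for all k, and y_{k+1} = Φ(y_k). Then for every k ∈ ℕ the Riemannian distance satisfies d_M(x_k, y_k) ≤ (1−β)^{k/2} · d_M(x_0, y_0) + √α₂ · ε · (1 − (1−β)^{k/2})/(1 − √(1−β)) when β < 1, and d_M(x_k,y_k) ≤ (1−β)^{k/2} d_M(x_0,y_0) + √α₂·ε when β = 1 and k ≥ 1. -/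
open Matrix

/-- The `M`-length of a path `c`: `ℓ_M(c) = ∫₀¹ √(c′(s)ᵀ M(c(s)) c′(s)) ds`. -/
noncomputable def pathLength {n : ℕ} (M : (Fin n → ℝ) → Matrix (Fin n) (Fin n) ℝ)
    (c : ℝ → Fin n → ℝ) : ℝ :=
  ∫ s in (0 : ℝ)..1, Real.sqrt (deriv c s ⬝ᵥ (M (c s)).mulVec (deriv c s))

/-- A piecewise-C¹ path on `[0,1]`: continuous, and C¹ on each piece of some
finite partition `0 = t₀ < t₁ < ⋯ < t_m = 1`. -/
def IsPiecewiseC1 {n : ℕ} (c : ℝ → Fin n → ℝ) : Prop :=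
  ContinuousOn c (Set.Icc 0 1) ∧
    ∃ (m : ℕ) (t : Fin (m + 1) → ℝ), StrictMono t ∧ t 0 = 0 ∧ t (Fin.last m) = 1 ∧
      ∀ i : Fin m, ContDiffOn ℝ 1 c (Set.Icc (t i.castSucc) (t i.succ))

/-- The Riemannian distance `d_M(x,y)`: the infimum of `ℓ_M(c)` over piecewise-C¹
paths `c` with `c 0 = x` and `c 1 = y`. -/
noncomputable def riemannianDist {n : ℕ} (M : (Fin n → ℝ) → Matrix (Fin n) (Fin n) ℝ)
    (x y : Fin n → ℝ) : ℝ :=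
  sInf {L | ∃ c : ℝ → Fin n → ℝ, IsPiecewiseC1 c ∧ c 0 = x ∧ c 1 = y ∧ pathLength M c = L}


/-!
A piecewise-C¹ path `c` from `a` to `b` yields a path from `Φ a + w` to `Φ b`: first the segment
from `Φ a + w` to `Φ a`, then `Φ ∘ c`. The upper bound on `M` makes the segment no longer than
`√α₂ ‖w‖`, and the contraction condition, applied pointwise to `c′`, makes `Φ ∘ c` no longer than
`√(1 - β) ℓ_M(c)`. Taking the infimum over `c` gives
`d_M(x_{k+1}, y_{k+1}) ≤ √(1 - β) d_M(x_k, y_k) + √α₂ ε`, and iterating this affine recursion gives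
the geometric bound.
-/

open MeasureTheory Set

section QuadraticForm

variable {ι : Type*} [Fintype ι]

theorem Matrix.sqrt_smul_dotProduct_mulVec_smul (A : Matrix ι ι ℝ) (a : ℝ) (v : ι → ℝ) :
    √((a • v) ⬝ᵥ A *ᵥ (a • v)) = |a| * √(v ⬝ᵥ A *ᵥ v) := by
  rw [smul_dotProduct, mulVec_smul, dotProduct_smul, smul_eq_mul, smul_eq_mul, ← mul_assoc,
    Real.sqrt_mul (mul_self_nonneg a), Real.sqrt_mul_self_eq_abs]

theorem Matrix.PosSemidef.sqrt_dotProduct_mulVec_mulVec_le {A B C : Matrix ι ι ℝ} {a : ℝ}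
    (h : (a • A - Cᵀ * B * C).PosSemidef) (ha : 0 ≤ a) (v : ι → ℝ) :
    √((C *ᵥ v) ⬝ᵥ B *ᵥ (C *ᵥ v)) ≤ √a * √(v ⬝ᵥ A *ᵥ v) := by
  have hv := h.dotProduct_mulVec_nonneg v
  rw [star_trivial, sub_mulVec, dotProduct_sub, smul_mulVec, dotProduct_smul, smul_eq_mul,
    ← mulVec_mulVec, ← mulVec_mulVec, dotProduct_mulVec v Cᵀ, vecMul_transpose] at hv
  rw [← Real.sqrt_mul ha]
  exact Real.sqrt_le_sqrt (by linarith)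

end QuadraticForm

theorem Fin.exists_mem_Ioo_of_notMem_range {α : Type*} [LinearOrder α] :
    ∀ {m : ℕ} (t : Fin (m + 1) → α) {u : α}, t 0 < u → u < t (Fin.last m) → u ∉ range t →
      ∃ i : Fin m, u ∈ Ioo (t i.castSucc) (t i.succ)
  | 0, _, _, h0, h1, _ => absurd (h0.trans h1) (lt_irrefl _)
  | m + 1, t, u, h0, h1, hu => by
    by_cases hlt : u < t (Fin.last m).castSucc
    · obtain ⟨i, hi⟩ := exists_mem_Ioo_of_notMem_range (fun j => t j.castSucc) h0 hlt
        fun ⟨j, hj⟩ => hu ⟨_, hj⟩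
      exact ⟨i.castSucc, hi⟩
    · exact ⟨Fin.last m, lt_of_le_of_ne (not_lt.mp hlt) fun h => hu ⟨_, h⟩, h1⟩

section Paths

variable {n : ℕ}

theorem ContDiffOn.isPiecewiseC1 {c : ℝ → Fin n → ℝ} (hc : ContDiffOn ℝ 1 c (Icc 0 1)) :
    IsPiecewiseC1 c :=
  ⟨hc.continuousOn, 1, ![0, 1], by simp, rfl, rfl, fun i => by fin_cases i; exact hc⟩

theorem ContDiff.comp_isPiecewiseC1 {Φ : (Fin n → ℝ) → Fin n → ℝ} (hΦ : ContDiff ℝ 1 Φ)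
    {c : ℝ → Fin n → ℝ} (hc : IsPiecewiseC1 c) : IsPiecewiseC1 (Φ ∘ c) := by
  obtain ⟨hcont, m, t, ht, ht0, htm, hpieces⟩ := hc
  exact ⟨hΦ.continuous.comp_continuousOn hcont, m, t, ht, ht0, htm,
    fun i => hΦ.comp_contDiffOn (hpieces i)⟩

theorem IsPiecewiseC1.ae_differentiableAt {c : ℝ → Fin n → ℝ} (hc : IsPiecewiseC1 c) :
    ∀ᵐ s ∂volume.restrict (Icc 0 1), DifferentiableAt ℝ c s := by
  obtain ⟨-, m, t, -, ht0, htm, hpieces⟩ := hc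
  rw [ae_restrict_iff' measurableSet_Icc]
  filter_upwards [measure_eq_zero_iff_ae_notMem.mp
    (((finite_range t).union (toFinite {0, 1})).measure_zero volume)] with s hs hs01
  simp only [mem_union, mem_insert_iff, mem_singleton_iff, not_or] at hs
  obtain ⟨hst, hs0, hs1⟩ := hs
  obtain ⟨i, hi⟩ := Fin.exists_mem_Ioo_of_notMem_range t
    (ht0 ▸ lt_of_le_of_ne hs01.1 (Ne.symm hs0)) (htm ▸ lt_of_le_of_ne hs01.2 hs1) hst
  exact ((hpieces i).differentiableOn one_ne_zero).differentiableAt (Icc_mem_nhds hi.1 hi.2)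

end Paths

section MetricSpeed

variable {n : ℕ} (M : (Fin n → ℝ) → Matrix (Fin n) (Fin n) ℝ)

noncomputable def metricSpeed (c : ℝ → Fin n → ℝ) (s : ℝ) : ℝ :=
  √(deriv c s ⬝ᵥ M (c s) *ᵥ deriv c s)

theorem pathLength_eq_integral_metricSpeed (c : ℝ → Fin n → ℝ) :
    pathLength M c = ∫ s in (0 : ℝ)..1, metricSpeed M c s := rfl

theorem pathLength_nonneg (c : ℝ → Fin n → ℝ) : 0 ≤ pathLength M c :=
  intervalIntegral.integral_nonneg zero_le_one fun _ _ => Real.sqrt_nonneg _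

theorem metricSpeed_congr_of_eventuallyEq {c d : ℝ → Fin n → ℝ} {s : ℝ} (h : c =ᶠ[nhds s] d) :
    metricSpeed M c s = metricSpeed M d s := by
  rw [metricSpeed, metricSpeed, h.deriv_eq, h.eq_of_nhds]

theorem metricSpeed_comp_mul_sub (c : ℝ → Fin n → ℝ) (a b s : ℝ) :
    metricSpeed M (fun s => c (a * s - b)) s = |a| * metricSpeed M c (a * s - b) := by
  have hderiv : deriv (fun s => c (a * s - b)) s = a • deriv c (a * s - b) := by
    rw [deriv_comp_mul_left a (fun u => c (u - b)), deriv_comp_sub_const]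
  rw [metricSpeed, hderiv, Matrix.sqrt_smul_dotProduct_mulVec_smul, metricSpeed]

theorem intervalIntegrable_metricSpeed_of_contDiffOn (hM : Continuous M) {c : ℝ → Fin n → ℝ}
    {a b : ℝ} (hab : a ≤ b) (hc : ContDiffOn ℝ 1 c (Icc a b)) :
    IntervalIntegrable (metricSpeed M c) volume a b := by
  rcases hab.eq_or_lt with rfl | hlt
  · exact IntervalIntegrable.refl
  set c' := derivWithin c (Icc a b)
  have hc' : ContinuousOn c' (Icc a b) :=
    hc.continuousOn_derivWithin (uniqueDiffOn_Icc hlt) le_rfl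
  have hform :
      Continuous fun p : (Fin n → ℝ) × Matrix (Fin n) (Fin n) ℝ => √(p.1 ⬝ᵥ p.2 *ᵥ p.1) :=
    (continuous_fst.dotProduct (continuous_snd.matrix_mulVec continuous_fst)).sqrt
  have hspeed : ContinuousOn (fun s => √(c' s ⬝ᵥ M (c s) *ᵥ c' s)) (Icc a b) :=
    hform.comp_continuousOn (hc'.prodMk (hM.comp_continuousOn hc.continuousOn))
  refine (hspeed.intervalIntegrable_of_Icc hab).congr_uIoo fun s hs => ?_
  rw [uIoo_of_le hab] at hs
  simp only [metricSpeed, c', derivWithin_of_mem_nhds (Icc_mem_nhds hs.1 hs.2)]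

theorem IsPiecewiseC1.intervalIntegrable_metricSpeed (hM : Continuous M) {c : ℝ → Fin n → ℝ}
    (hc : IsPiecewiseC1 c) : IntervalIntegrable (metricSpeed M c) volume 0 1 := by
  obtain ⟨-, m, t, ht, ht0, htm, hpieces⟩ := hc
  have key : ∀ j : Fin (m + 1), IntervalIntegrable (metricSpeed M c) volume (t 0) (t j) := by
    intro j
    induction j using Fin.induction with
    | zero => exact IntervalIntegrable.refl
    | succ i ih => exact ih.trans (intervalIntegrable_metricSpeed_of_contDiffOn M hM
        (ht.monotone i.castSucc_le_succ) (hpieces i))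
  simpa [ht0, htm] using key (Fin.last m)

end MetricSpeed

section Concatenation

variable {E : Type*}

noncomputable def concatPath (p q : ℝ → E) (s : ℝ) : E :=
  if s ≤ 1 / 2 then p (2 * s) else q (2 * s - 1)

theorem concatPath_zero (p q : ℝ → E) : concatPath p q 0 = p 0 := by
  norm_num [concatPath]

theorem concatPath_one (p q : ℝ → E) : concatPath p q 1 = q 1 := by
  norm_num [concatPath]

theorem concatPath_eqOn_left (p q : ℝ → E) :
    EqOn (concatPath p q) (fun s => p (2 * s)) (Iic (1 / 2)) :=
  fun _ hs => if_pos hs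

theorem concatPath_eqOn_right {p q : ℝ → E} (h : p 1 = q 0) :
    EqOn (concatPath p q) (fun s => q (2 * s - 1)) (Ici (1 / 2)) := by
  intro s hs
  rcases (mem_Ici.mp hs).eq_or_lt with rfl | hlt
  · norm_num [concatPath, h]
  · exact if_neg (not_le.mpr hlt)

variable {n : ℕ}

theorem isPiecewiseC1_concatPath {p q : ℝ → Fin n → ℝ} (hp : ContDiffOn ℝ 1 p (Icc 0 1))
    (hq : IsPiecewiseC1 q) (h : p 1 = q 0) : IsPiecewiseC1 (concatPath p q) := by
  obtain ⟨hqc, m, t, ht, ht0, htm, hpieces⟩ := hq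
  have ht_nonneg : ∀ i, 0 ≤ t i := fun i => ht0 ▸ ht.monotone (Fin.zero_le i)
  have hmaps : ∀ {a b : ℝ},
      MapsTo (fun s : ℝ => 2 * s - 1) (Icc ((1 + a) / 2) ((1 + b) / 2)) (Icc a b) :=
    fun hs => ⟨by linarith [hs.1], by linarith [hs.2]⟩
  have hleft : ContDiffOn ℝ 1 (concatPath p q) (Icc 0 (1 / 2)) :=
    (hp.comp (f := fun s => 2 * s) (by fun_prop)
      fun s hs => ⟨by linarith [hs.1], by linarith [hs.2]⟩).congr
      ((concatPath_eqOn_left p q).mono Icc_subset_Iic_self)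
  have hright : ∀ {a b : ℝ}, 0 ≤ a → ContDiffOn ℝ 1 q (Icc a b) →
      ContDiffOn ℝ 1 (concatPath p q) (Icc ((1 + a) / 2) ((1 + b) / 2)) := fun ha hqab =>
    (hqab.comp (f := fun s => 2 * s - 1) (by fun_prop) hmaps).congr
      ((concatPath_eqOn_right h).mono fun s hs => show 1 / 2 ≤ s by linarith [hs.1])
  refine ⟨?_, m + 1, Fin.cons 0 fun i => (1 + t i) / 2, ?_, rfl, ?_, fun i => ?_⟩
  · rw [← Icc_union_Icc_eq_Icc (by norm_num : (0 : ℝ) ≤ 1 / 2) (by norm_num : (1 / 2 : ℝ) ≤ 1)]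
    refine hleft.continuousOn.union_of_isClosed ?_ isClosed_Icc isClosed_Icc
    have hI : Icc ((1 + 0 : ℝ) / 2) ((1 + 1) / 2) = Icc (1 / 2) 1 := by norm_num
    exact hI ▸ (hqc.comp (f := fun s : ℝ => 2 * s - 1) (by fun_prop) hmaps).congr
      ((concatPath_eqOn_right h).mono fun s hs => show 1 / 2 ≤ s by linarith [hs.1])
  · exact Fin.strictMono_cons.mpr ⟨fun j => by linarith [ht_nonneg j],
      fun i j hij => by linarith [ht hij]⟩
  · rw [← Fin.succ_last, Fin.cons_succ, htm]
    norm_num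
  · induction i using Fin.cases with
    | zero => simpa [ht0] using hleft
    | succ j => simpa [← Fin.succ_castSucc] using hright (ht_nonneg _) (hpieces j)

end Concatenation

section Length

variable {n : ℕ} (M : (Fin n → ℝ) → Matrix (Fin n) (Fin n) ℝ)

theorem pathLength_concatPath (hM : Continuous M) {p q : ℝ → Fin n → ℝ}
    (hp : ContDiffOn ℝ 1 p (Icc 0 1)) (hq : IsPiecewiseC1 q) (h : p 1 = q 0) :
    pathLength M (concatPath p q) = pathLength M p + pathLength M q := by
  have hint := (isPiecewiseC1_concatPath hp hq h).intervalIntegrable_metricSpeed M hM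
  have hleft : ∫ s in (0 : ℝ)..1 / 2, metricSpeed M (concatPath p q) s = pathLength M p := by
    calc ∫ s in (0 : ℝ)..1 / 2, metricSpeed M (concatPath p q) s
        = ∫ s in (0 : ℝ)..1 / 2, 2 * metricSpeed M p (2 * s) := by
          refine intervalIntegral.integral_congr_Ioo_of_le (by norm_num) fun s hs => ?_
          rw [metricSpeed_congr_of_eventuallyEq M <| Filter.eventuallyEq_of_mem
            (Iio_mem_nhds hs.2) fun u hu => concatPath_eqOn_left p q (mem_Iic.mpr hu.le)]
          simpa using metricSpeed_comp_mul_sub M p 2 0 s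
      _ = pathLength M p := by
          rw [intervalIntegral.integral_const_mul,
            intervalIntegral.integral_comp_mul_left _ two_ne_zero]
          norm_num [pathLength_eq_integral_metricSpeed, ← mul_assoc]
  have hright : ∫ s in (1 / 2 : ℝ)..1, metricSpeed M (concatPath p q) s = pathLength M q := by
    calc ∫ s in (1 / 2 : ℝ)..1, metricSpeed M (concatPath p q) s
        = ∫ s in (1 / 2 : ℝ)..1, 2 * metricSpeed M q (2 * s - 1) := by
          refine intervalIntegral.integral_congr_Ioo_of_le (by norm_num) fun s hs => ?_
          rw [metricSpeed_congr_of_eventuallyEq M <| Filter.eventuallyEq_of_mem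
            (Ioi_mem_nhds hs.1) fun u hu => concatPath_eqOn_right h (mem_Ici.mpr hu.le),
            metricSpeed_comp_mul_sub, abs_two]
      _ = pathLength M q := by
          rw [intervalIntegral.integral_const_mul,
            intervalIntegral.integral_comp_mul_sub _ two_ne_zero]
          norm_num [pathLength_eq_integral_metricSpeed, ← mul_assoc]
  rw [pathLength_eq_integral_metricSpeed,
    ← intervalIntegral.integral_add_adjacent_intervals (b := 1 / 2)
    (hint.mono_set (uIcc_subset_uIcc_left (by norm_num)))
    (hint.mono_set (uIcc_subset_uIcc_right (by norm_num))), hleft, hright]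

end Length

section Distance

variable {n : ℕ} (M : (Fin n → ℝ) → Matrix (Fin n) (Fin n) ℝ)

theorem riemannianDist_le_pathLength {a b : Fin n → ℝ} {c : ℝ → Fin n → ℝ}
    (hc : IsPiecewiseC1 c) (h0 : c 0 = a) (h1 : c 1 = b) :
    riemannianDist M a b ≤ pathLength M c :=
  csInf_le ⟨0, by rintro _ ⟨c, -, -, -, rfl⟩; exact pathLength_nonneg M c⟩ ⟨c, hc, h0, h1, rfl⟩

theorem riemannianDist_le_mul_add {a b a' b' : Fin n → ℝ} {r C : ℝ} (hr : 0 ≤ r)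
    (h : ∀ c, IsPiecewiseC1 c → c 0 = a → c 1 = b →
      riemannianDist M a' b' ≤ r * pathLength M c + C) :
    riemannianDist M a' b' ≤ r * riemannianDist M a b + C := by
  have hsegment : IsPiecewiseC1 fun s : ℝ => a + s • (b - a) := by
    apply ContDiffOn.isPiecewiseC1
    fun_prop
  have hne : {L | ∃ c : ℝ → Fin n → ℝ, IsPiecewiseC1 c ∧ c 0 = a ∧ c 1 = b ∧
      pathLength M c = L}.Nonempty := ⟨_, _, hsegment, by simp, by simp, rfl⟩
  unfold riemannianDist
  rw [← smul_eq_mul, ← Real.sInf_smul_of_nonneg hr, ← sub_le_iff_le_add]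
  refine le_csInf hne.smul_set ?_
  rintro _ ⟨_, ⟨c, hc, h0, h1, rfl⟩, rfl⟩
  exact sub_le_iff_le_add.mpr (h c hc h0 h1)

variable {β α₂ : ℝ} {Φ : (Fin n → ℝ) → Fin n → ℝ}
  {J : (Fin n → ℝ) → Matrix (Fin n) (Fin n) ℝ}

theorem pathLength_comp_le (hβ1 : β ≤ 1) (hΦ : ContDiff ℝ 1 Φ)
    (hJ : ∀ x, HasFDerivAt Φ (J x).mulVecLin.toContinuousLinearMap x) (hM : Continuous M)
    (hcontr : ∀ x, ((1 - β) • M x - (J x)ᵀ * M (Φ x) * J x).PosSemidef)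
    {c : ℝ → Fin n → ℝ} (hc : IsPiecewiseC1 c) :
    pathLength M (Φ ∘ c) ≤ √(1 - β) * pathLength M c := by
  rw [pathLength_eq_integral_metricSpeed, pathLength_eq_integral_metricSpeed,
    ← intervalIntegral.integral_const_mul]
  refine intervalIntegral.integral_mono_ae_restrict zero_le_one
    ((hΦ.comp_isPiecewiseC1 hc).intervalIntegrable_metricSpeed M hM)
    ((hc.intervalIntegrable_metricSpeed M hM).const_mul _) ?_
  filter_upwards [hc.ae_differentiableAt] with s hs
  have hderiv : deriv (Φ ∘ c) s = J (c s) *ᵥ deriv c s := by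
    simpa using ((hJ (c s)).comp_hasDerivAt s hs.hasDerivAt).deriv
  rw [metricSpeed, hderiv, Function.comp_apply]
  exact (hcontr (c s)).sqrt_dotProduct_mulVec_mulVec_le (sub_nonneg.mpr hβ1) (deriv c s)

theorem pathLength_segment_le
    (hMub : ∀ x (v : Fin n → ℝ), v ⬝ᵥ (M x).mulVec v ≤ α₂ * (euclNorm v) ^ 2)
    (z w : Fin n → ℝ) :
    pathLength M (fun s => z + (1 - s) • w) ≤ √α₂ * euclNorm w := by
  have hspeed : ∀ s, ‖metricSpeed M (fun s => z + (1 - s) • w) s‖ ≤ √α₂ * euclNorm w := by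
    intro s
    have hderiv : deriv (fun s : ℝ => z + (1 - s) • w) s = -w := by
      simpa using (((hasDerivAt_id s).const_sub 1).smul_const w).const_add z |>.deriv
    rw [metricSpeed, Real.norm_of_nonneg (Real.sqrt_nonneg _), hderiv, neg_dotProduct,
      mulVec_neg, dotProduct_neg, neg_neg]
    calc √(w ⬝ᵥ M (z + (1 - s) • w) *ᵥ w) ≤ √(α₂ * euclNorm w ^ 2) :=
          Real.sqrt_le_sqrt (hMub _ w)
      _ = √α₂ * euclNorm w := by
          rw [Real.sqrt_mul' _ (sq_nonneg _), Real.sqrt_sq (x := euclNorm w) (Real.sqrt_nonneg _)]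
  rw [pathLength_eq_integral_metricSpeed]
  exact (le_abs_self _).trans (by simpa using
    intervalIntegral.norm_integral_le_of_norm_le_const (a := 0) (b := 1) fun s _ => hspeed s)

theorem riemannianDist_map_add_le (hβ1 : β ≤ 1) (hΦ : ContDiff ℝ 1 Φ)
    (hJ : ∀ x, HasFDerivAt Φ (J x).mulVecLin.toContinuousLinearMap x) (hM : Continuous M)
    (hMub : ∀ x (v : Fin n → ℝ), v ⬝ᵥ (M x).mulVec v ≤ α₂ * (euclNorm v) ^ 2)
    (hcontr : ∀ x, ((1 - β) • M x - (J x)ᵀ * M (Φ x) * J x).PosSemidef) (a b w : Fin n → ℝ) :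
    riemannianDist M (Φ a + w) (Φ b) ≤ √(1 - β) * riemannianDist M a b + √α₂ * euclNorm w := by
  refine riemannianDist_le_mul_add M (Real.sqrt_nonneg _) fun c hc h0 h1 => ?_
  set p : ℝ → Fin n → ℝ := fun s => Φ a + (1 - s) • w
  have hp : ContDiffOn ℝ 1 p (Icc 0 1) := by fun_prop
  have hq := hΦ.comp_isPiecewiseC1 hc
  have hpq : p 1 = (Φ ∘ c) 0 := by simp [p, h0]
  calc riemannianDist M (Φ a + w) (Φ b) ≤ pathLength M (concatPath p (Φ ∘ c)) :=
        riemannianDist_le_pathLength M (isPiecewiseC1_concatPath hp hq hpq)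
          (by simp [concatPath_zero, p]) (by simp [concatPath_one, h1])
    _ = pathLength M p + pathLength M (Φ ∘ c) := pathLength_concatPath M hM hp hq hpq
    _ ≤ √α₂ * euclNorm w + √(1 - β) * pathLength M c :=
        add_le_add (pathLength_segment_le M hMub _ _)
          (pathLength_comp_le M hβ1 hΦ hJ hM hcontr hc)
    _ = √(1 - β) * pathLength M c + √α₂ * euclNorm w := add_comm _ _

end Distance

theorem le_pow_mul_add_of_le_mul_add {K : Type*} [Field K] [LinearOrder K]
    [IsStrictOrderedRing K] {u : ℕ → K} {r C : K} (hr0 : 0 ≤ r) (hr1 : r ≠ 1)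
    (h : ∀ k, u (k + 1) ≤ r * u k + C) (k : ℕ) :
    u k ≤ r ^ k * u 0 + C * (1 - r ^ k) / (1 - r) := by
  induction k with
  | zero => simp
  | succ k ih =>
    have hr : 1 - r ≠ 0 := sub_ne_zero.mpr hr1.symm
    calc u (k + 1) ≤ r * u k + C := h k
      _ ≤ r * (r ^ k * u 0 + C * (1 - r ^ k) / (1 - r)) + C := by gcongr
      _ = r ^ (k + 1) * u 0 + C * (1 - r ^ (k + 1)) / (1 - r) := by field_simp; ring

theorem perturbed_contraction_riemannian_tracking_bound_general
    (n : ℕ) (β α₂ ε : ℝ)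
    (hβ0 : 0 < β) (hβ1 : β ≤ 1)
    (Φ : (Fin n → ℝ) → Fin n → ℝ) (hΦ : ContDiff ℝ 1 Φ)
    (J : (Fin n → ℝ) → Matrix (Fin n) (Fin n) ℝ)
    (hJ : ∀ x, HasFDerivAt Φ (J x).mulVecLin.toContinuousLinearMap x)
    (M : (Fin n → ℝ) → Matrix (Fin n) (Fin n) ℝ)
    (hMcont : Continuous M)
    (hMub : ∀ x (v : Fin n → ℝ), v ⬝ᵥ (M x).mulVec v ≤ α₂ * (euclNorm v) ^ 2)
    (hcontr : ∀ x, ((1 - β) • M x - (J x)ᵀ * M (Φ x) * J x).PosSemidef)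
    (x y : ℕ → Fin n → ℝ) (w : ℕ → Fin n → ℝ)
    (hx : ∀ k, x (k + 1) = Φ (x k) + w k)
    (hw : ∀ k, euclNorm (w k) ≤ ε)
    (hy : ∀ k, y (k + 1) = Φ (y k)) :
    (β < 1 → ∀ k : ℕ,
        riemannianDist M (x k) (y k) ≤
          (1 - β) ^ ((k : ℝ) / 2) * riemannianDist M (x 0) (y 0) +
            Real.sqrt α₂ * ε * (1 - (1 - β) ^ ((k : ℝ) / 2)) / (1 - Real.sqrt (1 - β))) ∧
    (β = 1 → ∀ k : ℕ, 1 ≤ k →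
        riemannianDist M (x k) (y k) ≤
          (1 - β) ^ ((k : ℝ) / 2) * riemannianDist M (x 0) (y 0) + Real.sqrt α₂ * ε) := by
  have hstep : ∀ k, riemannianDist M (x (k + 1)) (y (k + 1)) ≤
      √(1 - β) * riemannianDist M (x k) (y k) + √α₂ * ε := fun k => by
    rw [hx, hy]
    refine (riemannianDist_map_add_le M hβ1 hΦ hJ hMcont hMub hcontr _ _ _).trans ?_
    gcongr
    exact hw k
  have hpow : ∀ k : ℕ, (1 - β) ^ ((k : ℝ) / 2) = √(1 - β) ^ k := fun k => by
    rw [Real.rpow_div_two_eq_sqrt _ (sub_nonneg.mpr hβ1), Real.rpow_natCast]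
  refine ⟨fun _ k => ?_, fun hβ k hk => ?_⟩
  · have hr : √(1 - β) ≠ 1 := by
      rw [Ne, Real.sqrt_eq_one]
      linarith
    rw [hpow]
    exact le_pow_mul_add_of_le_mul_add (u := fun k => riemannianDist M (x k) (y k))
      (Real.sqrt_nonneg _) hr hstep k
  · obtain ⟨j, rfl⟩ := Nat.exists_eq_add_of_le' hk
    rw [hpow]
    simpa [hβ] using hstep j

/-- Lemma 2: for a contracting C¹ map `Φ` (with Jacobian `J(x) = DΦ(x)`,
continuous uniformly bounded symmetric metric `M`, and contraction condition
`DΦ(x)ᵀ M(Φ(x)) DΦ(x) ⪯ (1-β) M(x)`), a trajectory `x_{k+1} = Φ(x_k) + w_k` perturbed by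
`‖w_k‖ ≤ ε` tracks the unperturbed trajectory `y_{k+1} = Φ(y_k)` within the Riemannian
bound `d_M(x_k,y_k) ≤ (1-β)^{k/2} d_M(x_0,y_0) + √α₂ ε (1-(1-β)^{k/2})/(1-√(1-β))`
when `β < 1`, and `d_M(x_k,y_k) ≤ (1-β)^{k/2} d_M(x_0,y_0) + √α₂ ε` when `β = 1, k ≥ 1`. -/
theorem perturbed_contraction_riemannian_tracking_bound
    (n : ℕ) (hn : 1 ≤ n) (β α₁ α₂ ε : ℝ)
    (hβ0 : 0 < β) (hβ1 : β ≤ 1) (hα₁ : 0 < α₁) (hα₁₂ : α₁ ≤ α₂) (hε : 0 ≤ ε)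
    (Φ : (Fin n → ℝ) → Fin n → ℝ) (hΦ : ContDiff ℝ 1 Φ)
    (J : (Fin n → ℝ) → Matrix (Fin n) (Fin n) ℝ)
    (hJ : ∀ x, HasFDerivAt Φ (J x).mulVecLin.toContinuousLinearMap x)
    (M : (Fin n → ℝ) → Matrix (Fin n) (Fin n) ℝ)
    (hMcont : Continuous M) (hMsym : ∀ x, (M x).IsHermitian)
    (hMlb : ∀ x (v : Fin n → ℝ), α₁ * (euclNorm v) ^ 2 ≤ v ⬝ᵥ (M x).mulVec v)
    (hMub : ∀ x (v : Fin n → ℝ), v ⬝ᵥ (M x).mulVec v ≤ α₂ * (euclNorm v) ^ 2)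
    (hcontr : ∀ x, ((1 - β) • M x - (J x)ᵀ * M (Φ x) * J x).PosSemidef)
    (x y : ℕ → Fin n → ℝ) (w : ℕ → Fin n → ℝ)
    (hx : ∀ k, x (k + 1) = Φ (x k) + w k)
    (hw : ∀ k, euclNorm (w k) ≤ ε)
    (hy : ∀ k, y (k + 1) = Φ (y k)) :
    (β < 1 → ∀ k : ℕ,
        riemannianDist M (x k) (y k) ≤
          (1 - β) ^ ((k : ℝ) / 2) * riemannianDist M (x 0) (y 0) +
            Real.sqrt α₂ * ε * (1 - (1 - β) ^ ((k : ℝ) / 2)) / (1 - Real.sqrt (1 - β))) ∧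
    (β = 1 → ∀ k : ℕ, 1 ≤ k →
        riemannianDist M (x k) (y k) ≤
          (1 - β) ^ ((k : ℝ) / 2) * riemannianDist M (x 0) (y 0) + Real.sqrt α₂ * ε) :=
  perturbed_contraction_riemannian_tracking_bound_general n β α₂ ε hβ0 hβ1 Φ hΦ J hJ M hMcont hMub
    hcontr x y w hx hw hy
end
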